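/- Let G = (V,E) be a connected finite simple graph with edge unitaries U_{ab} (U_{ba} = U_{ab}†) forming a simple unitary labelled graph with attached space ℂⁿ. Fix a vertex v₀ ∈ V and for each s ∈ V let U_s denote the product of edge unitaries along any walk from v₀ to s (this is well-defined by simplicity, with U_{v₀} = 1). Then for any orthonormal basis {e_j}_{j=1}^n of ℂⁿ, the n vectors Ψ_j := |V|^{−1/2} Σ_{s∈V} |s⟩ ⊗ U_s e_j form an orthonormal basis of the kernel of the associated Hamiltonian H(G); in particular, the kernel of H(G) has dimension exactly n. -/

import Mathlib

open Matrix BigOperators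
open scoped Kronecker

/-- The product of the edge unitaries along a walk `v₀ v₁ ⋯ v_k`, namely
`U_{v_{k−1} v_k} ⋯ U_{v₁ v₂} U_{v₀ v₁}`. -/
noncomputable def walkProd {V : Type} (G : SimpleGraph V) {n : ℕ}
    (U : V → V → Matrix (Fin n) (Fin n) ℂ) :
    ∀ {u v : V}, G.Walk u v → Matrix (Fin n) (Fin n) ℂ
  | _, _, SimpleGraph.Walk.nil => 1
  | u, _, SimpleGraph.Walk.cons (v := b) _ p => walkProd G U p * U u b

/-- The Hamiltonian `H(G)` associated to a unitary labelled graph, written as one half of the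
sum over ordered pairs of adjacent vertices of the terms
`|a⟩⟨a|⊗1 + |b⟩⟨b|⊗1 − |a⟩⟨b|⊗U_{ab}† − |b⟩⟨a|⊗U_{ab}`. -/
noncomputable def ulgHam {V : Type} [Fintype V] [DecidableEq V]
    (G : SimpleGraph V) [DecidableRel G.Adj] {n : ℕ}
    (U : V → V → Matrix (Fin n) (Fin n) ℂ) : Matrix (V × Fin n) (V × Fin n) ℂ :=
  (1 / 2 : ℂ) • ∑ a : V, ∑ b : V,
    if G.Adj a b then
      Matrix.single a a (1 : ℂ) ⊗ₖ (1 : Matrix (Fin n) (Fin n) ℂ)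
        + Matrix.single b b (1 : ℂ) ⊗ₖ (1 : Matrix (Fin n) (Fin n) ℂ)
        - Matrix.single a b (1 : ℂ) ⊗ₖ (U a b)ᴴ
        - Matrix.single b a (1 : ℂ) ⊗ₖ (U a b)
    else 0

/-- The vector `Ψ_j := |V|^{−1/2} Σ_{s∈V} |s⟩ ⊗ U_s e_j` of a unitary labelled graph. -/
noncomputable def kerVec {V : Type} [Fintype V] {n : ℕ}
    (Us : V → Matrix (Fin n) (Fin n) ℂ) (e : Fin n → (Fin n → ℂ)) (j : Fin n) :
    V × Fin n → ℂ :=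
  fun p => (((Real.sqrt (Fintype.card V) : ℝ) : ℂ))⁻¹ * (Us p.1 *ᵥ e j) p.2

/- ### Auxiliary lemmas -/

lemma walkProd_append {V : Type} (G : SimpleGraph V) {n : ℕ}
    (U : V → V → Matrix (Fin n) (Fin n) ℂ) {u v w : V}
    (p : G.Walk u v) (q : G.Walk v w) :
    walkProd G U (p.append q) = walkProd G U q * walkProd G U p := by
  induction p with
  | nil => simp [walkProd]
  | cons h p ih => simp [walkProd, SimpleGraph.Walk.cons_append, ih, mul_assoc]

lemma walkProd_unitary {V : Type} (G : SimpleGraph V) {n : ℕ}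
    (U : V → V → Matrix (Fin n) (Fin n) ℂ)
    (hU : ∀ a b, G.Adj a b → U a b ∈ Matrix.unitaryGroup (Fin n) ℂ)
    {u v : V} (p : G.Walk u v) :
    walkProd G U p ∈ Matrix.unitaryGroup (Fin n) ℂ := by
  induction p with
  | nil => exact one_mem _
  | cons h p ih => exact mul_mem ih (hU _ _ h)

lemma my_sum_mulVec {m n α : Type*} [Fintype n] [NonUnitalNonAssocSemiring α] {ι : Type*}
    (s : Finset ι) (A : ι → Matrix m n α) (x : n → α) :
    (∑ i ∈ s, A i) *ᵥ x = ∑ i ∈ s, A i *ᵥ x :=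
  map_sum (Matrix.mulVec.addMonoidHomLeft x) A s

lemma my_dot_sum {κ : Type*} [Fintype κ] {ι : Type*}
    (s : Finset ι) (v : κ → ℂ) (f : ι → κ → ℂ) :
    v ⬝ᵥ (∑ i ∈ s, f i) = ∑ i ∈ s, v ⬝ᵥ f i := by
  simp only [dotProduct, Finset.sum_apply, Finset.mul_sum]
  rw [Finset.sum_comm]

lemma my_mulVec_sum {n : ℕ} {ι : Type*} (s : Finset ι)
    (M : Matrix (Fin n) (Fin n) ℂ) (f : ι → Fin n → ℂ) :
    M *ᵥ (∑ i ∈ s, f i) = ∑ i ∈ s, M *ᵥ f i :=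
  map_sum (Matrix.mulVecLin M) f s

lemma kron_std_mulVec {V : Type} [Fintype V] [DecidableEq V] {n : ℕ}
    (a b : V) (M : Matrix (Fin n) (Fin n) ℂ) (x : V × Fin n → ℂ) :
    (Matrix.single a b (1 : ℂ) ⊗ₖ M) *ᵥ x =
      fun p => if p.1 = a then (M *ᵥ fun j => x (b, j)) p.2 else 0 := by
  funext ⟨p, i⟩
  simp only [Matrix.mulVec, dotProduct, Fintype.sum_prod_type,
    Matrix.kroneckerMap_apply, Matrix.single]
  by_cases hp : p = a
  · subst hp
    simp only [if_pos rfl]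
    rw [Finset.sum_eq_single b]
    · simp
    · intro q _ hq; simp [Ne.symm hq]
    · simp
  · simp [Ne.symm hp, hp]

/-- The edge term of the Hamiltonian applied to a vector. -/
noncomputable def edgeF {V : Type} {n : ℕ}
    (U : V → V → Matrix (Fin n) (Fin n) ℂ) (x : V × Fin n → ℂ) (a b : V)
    [DecidableEq V] : V × Fin n → ℂ :=
  fun p =>
    (if p.1 = a then ((fun j => x (a, j)) - (U a b)ᴴ *ᵥ (fun j => x (b, j))) p.2 else 0)
    + (if p.1 = b then ((fun j => x (b, j)) - U a b *ᵥ (fun j => x (a, j))) p.2 else 0)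

lemma ham_mulVec {V : Type} [Fintype V] [DecidableEq V]
    (G : SimpleGraph V) [DecidableRel G.Adj] {n : ℕ}
    (U : V → V → Matrix (Fin n) (Fin n) ℂ) (x : V × Fin n → ℂ) :
    ulgHam G U *ᵥ x = (1 / 2 : ℂ) • ∑ a : V, ∑ b : V,
      if G.Adj a b then edgeF U x a b else 0 := by
  unfold ulgHam
  rw [Matrix.smul_mulVec]
  congr 1
  rw [my_sum_mulVec]
  refine Finset.sum_congr rfl fun a _ => ?_
  rw [my_sum_mulVec]
  refine Finset.sum_congr rfl fun b _ => ?_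
  by_cases h : G.Adj a b
  · simp only [if_pos h]
    rw [Matrix.sub_mulVec, Matrix.sub_mulVec, Matrix.add_mulVec,
      kron_std_mulVec, kron_std_mulVec, kron_std_mulVec, kron_std_mulVec]
    funext ⟨p, i⟩
    simp only [edgeF, Pi.add_apply, Pi.sub_apply, Matrix.one_mulVec, Pi.sub_apply]
    by_cases hpa : p = a <;> by_cases hpb : p = b <;> simp [hpa, hpb, h.ne, h.ne']
  · simp [h]

lemma quadF {V : Type} [Fintype V] [DecidableEq V] {n : ℕ}
    (U : V → V → Matrix (Fin n) (Fin n) ℂ) (x : V × Fin n → ℂ) (a b : V)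
    (hU : (U a b)ᴴ * U a b = 1) :
    star x ⬝ᵥ edgeF U x a b =
      star ((fun j => x (b, j)) - U a b *ᵥ (fun j => x (a, j))) ⬝ᵥ
        ((fun j => x (b, j)) - U a b *ᵥ (fun j => x (a, j))) := by
  set va : Fin n → ℂ := fun j => x (a, j) with hva
  set vb : Fin n → ℂ := fun j => x (b, j) with hvb
  have hL : star x ⬝ᵥ edgeF U x a b
      = star va ⬝ᵥ (va - (U a b)ᴴ *ᵥ vb) + star vb ⬝ᵥ (vb - U a b *ᵥ va) := by
    simp only [dotProduct, Fintype.sum_prod_type, edgeF, Pi.star_apply,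
      mul_add, Finset.sum_add_distrib]
    congr 1
    · rw [Finset.sum_eq_single a]
      · simp [hva, hvb]
      · intro q _ hq; simp [hq]
      · simp
    · rw [Finset.sum_eq_single b]
      · simp [hva, hvb]
      · intro q _ hq; simp [hq]
      · simp
  rw [hL]
  rw [star_sub, Matrix.star_mulVec]
  simp only [sub_dotProduct, dotProduct_sub, ← Matrix.dotProduct_mulVec,
    Matrix.mulVec_mulVec, hU, Matrix.one_mulVec]
  ring

lemma star_dot_self {n : ℕ} (v : Fin n → ℂ) :
    star v ⬝ᵥ v = ((∑ i, Complex.normSq (v i) : ℝ) : ℂ) := by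
  push_cast
  simp [dotProduct, Complex.normSq_eq_conj_mul_self]

lemma star_dot_self_eq_zero {n : ℕ} (v : Fin n → ℂ) (h : star v ⬝ᵥ v = 0) : v = 0 := by
  rw [star_dot_self] at h
  rw [Complex.ofReal_eq_zero] at h
  funext i
  have hi := (Finset.sum_eq_zero_iff_of_nonneg
    (fun i _ => Complex.normSq_nonneg (v i))).mp h i (Finset.mem_univ i)
  exact Complex.normSq_eq_zero.mp hi

/-- For a connected simple unitary labelled graph with base vertex `v₀` and
`U_s` the (well-defined) product of edge unitaries along any walk from `v₀` to `s`, the vectors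
`Ψ_j = |V|^{−1/2} Σ_s |s⟩ ⊗ U_s e_j` (for an orthonormal basis `{e_j}` of `ℂⁿ`) form an
orthonormal basis of the kernel of `H(G)`; in particular that kernel has dimension `n`. -/
theorem ulg_kernel_basis
    {V : Type} [Fintype V] [DecidableEq V]
    (G : SimpleGraph V) [DecidableRel G.Adj]
    {n : ℕ} (hn : 1 ≤ n)
    (U : V → V → Matrix (Fin n) (Fin n) ℂ)
    (hG : G.Connected)
    (hUunitary : ∀ a b, G.Adj a b → U a b ∈ Matrix.unitaryGroup (Fin n) ℂ)
    (hUdagger : ∀ a b, G.Adj a b → U b a = (U a b)ᴴ)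
    (hsimple : ∀ (v : V) (w : G.Walk v v), walkProd G U w = 1)
    (v₀ : V) (Us : V → Matrix (Fin n) (Fin n) ℂ)
    (hUs : ∀ (s : V) (w : G.Walk v₀ s), walkProd G U w = Us s)
    (e : Fin n → (Fin n → ℂ))
    (he : ∀ i j : Fin n, star (e i) ⬝ᵥ e j = if i = j then (1 : ℂ) else 0) :
    (∀ j k : Fin n,
        star (kerVec Us e j) ⬝ᵥ kerVec Us e k = if j = k then (1 : ℂ) else 0)
    ∧ (∀ x : V × Fin n → ℂ,
        ulgHam G U *ᵥ x = 0 ↔ x ∈ Submodule.span ℂ (Set.range (kerVec Us e)))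
    ∧ Module.finrank ℂ (LinearMap.ker (Matrix.toLin' (ulgHam G U))) = n := by
  have hVpos : 0 < Fintype.card V := by
    have : Nonempty V := hG.nonempty
    exact Fintype.card_pos
  set r : ℝ := Real.sqrt (Fintype.card V) with hr
  have hrpos : 0 < r := Real.sqrt_pos.mpr (by exact_mod_cast hVpos)
  have hrr : r * r = (Fintype.card V : ℝ) := Real.mul_self_sqrt (by positivity)
  set c : ℂ := ((r : ℝ) : ℂ)⁻¹ with hc
  have hrne : ((r : ℝ) : ℂ) ≠ 0 := by exact_mod_cast hrpos.ne'
  have hcne : c ≠ 0 := inv_ne_zero hrne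
  -- unitarity of Us
  have hUsmem : ∀ s, Us s ∈ Matrix.unitaryGroup (Fin n) ℂ := by
    intro s
    obtain ⟨w⟩ := hG.preconnected v₀ s
    rw [← hUs s w]
    exact walkProd_unitary G U hUunitary w
  have hUsL : ∀ s, (Us s)ᴴ * Us s = 1 := by
    intro s
    have := (Matrix.mem_unitaryGroup_iff'.mp (hUsmem s))
    simpa [Matrix.star_eq_conjTranspose] using this
  have hUL : ∀ a b, G.Adj a b → (U a b)ᴴ * U a b = 1 := by
    intro a b hab
    have := (Matrix.mem_unitaryGroup_iff'.mp (hUunitary a b hab))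
    simpa [Matrix.star_eq_conjTranspose] using this
  -- edge relation for Us
  have hedge : ∀ a b, G.Adj a b → Us b = U a b * Us a := by
    intro a b hab
    obtain ⟨w⟩ := hG.preconnected v₀ a
    have h1 : walkProd G U w = Us a := hUs a w
    have h2 : walkProd G U (w.concat hab) = Us b := hUs b (w.concat hab)
    rw [SimpleGraph.Walk.concat_eq_append, walkProd_append] at h2
    simp only [walkProd, one_mul] at h2
    rw [← h2, ← h1]
  -- star inner products
  have hUsdot : ∀ (s : V) (v w : Fin n → ℂ),
      star (Us s *ᵥ v) ⬝ᵥ (Us s *ᵥ w) = star v ⬝ᵥ w := by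
    intro s v w
    rw [Matrix.star_mulVec, Matrix.dotProduct_mulVec, Matrix.vecMul_vecMul,
      hUsL s, Matrix.vecMul_one]
  -- constant
  have hcc : (starRingEnd ℂ) c * c * (Fintype.card V : ℂ) = 1 := by
    rw [hc, map_inv₀, Complex.conj_ofReal, ← mul_inv, ← Complex.ofReal_mul, hrr]
    push_cast
    exact inv_mul_cancel₀ (Nat.cast_ne_zero.mpr hVpos.ne')
  -- Part 1 : orthonormality
  have orth : ∀ j k : Fin n,
      star (kerVec Us e j) ⬝ᵥ kerVec Us e k = if j = k then (1 : ℂ) else 0 := by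
    intro j k
    have expand : star (kerVec Us e j) ⬝ᵥ kerVec Us e k
        = (starRingEnd ℂ) c * c *
            ∑ s : V, star (Us s *ᵥ e j) ⬝ᵥ (Us s *ᵥ e k) := by
      simp only [dotProduct, Fintype.sum_prod_type, kerVec, Pi.star_apply,
        star_mul', Finset.mul_sum]
      refine Finset.sum_congr rfl fun s _ => Finset.sum_congr rfl fun i _ => ?_
      simp only [Pi.star_apply, RCLike.star_def]
      ring
    rw [expand]
    have : ∀ s : V, star (Us s *ᵥ e j) ⬝ᵥ (Us s *ᵥ e k) = if j = k then (1:ℂ) else 0 := by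
      intro s; rw [hUsdot, he]
    simp only [this, Finset.sum_const, Finset.card_univ, nsmul_eq_mul]
    by_cases hjk : j = k
    · subst hjk
      simpa using hcc
    · simp [hjk]
  have hiff : ∀ x : V × Fin n → ℂ,
      ulgHam G U *ᵥ x = 0 ↔ x ∈ Submodule.span ℂ (Set.range (kerVec Us e)) := by
    -- Part 2 : kernel characterization
    -- (⇐) each kerVec is in the kernel
    have hker : ∀ j : Fin n, ulgHam G U *ᵥ kerVec Us e j = 0 := by
      intro j
      rw [ham_mulVec]
      have hzero : ∀ a b : V, G.Adj a b → edgeF U (kerVec Us e j) a b = 0 := by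
        intro a b hab
        have h1 : ((fun i => kerVec Us e j (a, i)) : Fin n → ℂ) -
            (U a b)ᴴ *ᵥ (fun i => kerVec Us e j (b, i)) = 0 := by
          show (c • (Us a *ᵥ e j)) - (U a b)ᴴ *ᵥ (c • (Us b *ᵥ e j)) = 0
          rw [Matrix.mulVec_smul, Matrix.mulVec_mulVec,
            show (U a b)ᴴ * Us b = Us a by
              rw [hedge a b hab, ← mul_assoc, hUL a b hab, one_mul],
            sub_self]
        have h2 : ((fun i => kerVec Us e j (b, i)) : Fin n → ℂ) -
            U a b *ᵥ (fun i => kerVec Us e j (a, i)) = 0 := by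
          show (c • (Us b *ᵥ e j)) - U a b *ᵥ (c • (Us a *ᵥ e j)) = 0
          rw [Matrix.mulVec_smul, Matrix.mulVec_mulVec, ← hedge a b hab, sub_self]
        funext p
        simp only [edgeF, h1, h2, Pi.zero_apply, ite_self, add_zero]
      have : ∀ a b : V, (if G.Adj a b then edgeF U (kerVec Us e j) a b else 0) = 0 := by
        intro a b
        by_cases h : G.Adj a b
        · simp [h, hzero a b h]
        · simp [h]
      simp [this]
    intro x
    constructor
    · -- (⇒) kernel element is in the span
      intro hx
      rw [ham_mulVec] at hx
      have hS : (∑ a : V, ∑ b : V, if G.Adj a b then edgeF U x a b else 0) = 0 := by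
        have := hx
        rw [smul_eq_zero] at this
        rcases this with h | h
        · norm_num at h
        · exact h
      -- quadratic form argument
      have hdot : (∑ a : V, ∑ b : V, if G.Adj a b then
          ((∑ i, Complex.normSq
            (((fun j => x (b, j)) - U a b *ᵥ (fun j => x (a, j))) i) : ℝ) : ℂ) else 0) = 0 := by
        have h0 := congrArg (fun y => star x ⬝ᵥ y) hS
        simp only [dotProduct_zero] at h0
        rw [my_dot_sum] at h0
        simp only [my_dot_sum] at h0
        refine Eq.trans ?_ h0
        refine Finset.sum_congr rfl fun a _ => Finset.sum_congr rfl fun b _ => ?_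
        by_cases h : G.Adj a b
        · simp only [if_pos h]
          rw [quadF U x a b (hUL a b h), star_dot_self]
        · simp [h]
      have hreal : (∑ a : V, ∑ b : V, if G.Adj a b then
          (∑ i, Complex.normSq
            (((fun j => x (b, j)) - U a b *ᵥ (fun j => x (a, j))) i) : ℝ) else 0) = 0 := by
        have : ((∑ a : V, ∑ b : V, if G.Adj a b then
            (∑ i, Complex.normSq
              (((fun j => x (b, j)) - U a b *ᵥ (fun j => x (a, j))) i) : ℝ) else 0 : ℝ) : ℂ) = 0 := by
          rw [← hdot]
          push_cast [apply_ite (fun t : ℝ => (t : ℂ))]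
          rfl
        exact_mod_cast this
      have hedgeEq : ∀ a b : V, G.Adj a b →
          (fun j => x (b, j)) = U a b *ᵥ (fun j => x (a, j)) := by
        intro a b hab
        have h1 : ∀ a ∈ Finset.univ (α := V), (0:ℝ) ≤ ∑ b : V, if G.Adj a b then
            (∑ i, Complex.normSq
              (((fun j => x (b, j)) - U a b *ᵥ (fun j => x (a, j))) i) : ℝ) else 0 := by
          intro a _
          refine Finset.sum_nonneg fun b _ => ?_
          by_cases h : G.Adj a b
          · simp only [if_pos h]
            exact Finset.sum_nonneg fun i _ => Complex.normSq_nonneg _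
          · simp [h]
        have h2 := (Finset.sum_eq_zero_iff_of_nonneg h1).mp hreal a (Finset.mem_univ a)
        have h3 : ∀ b ∈ Finset.univ (α := V), (0:ℝ) ≤ if G.Adj a b then
            (∑ i, Complex.normSq
              (((fun j => x (b, j)) - U a b *ᵥ (fun j => x (a, j))) i) : ℝ) else 0 := by
          intro b _
          by_cases h : G.Adj a b
          · simp only [if_pos h]
            exact Finset.sum_nonneg fun i _ => Complex.normSq_nonneg _
          · simp [h]
        have h4 := (Finset.sum_eq_zero_iff_of_nonneg h3).mp h2 b (Finset.mem_univ b)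
        rw [if_pos hab] at h4
        have h5 : ((fun j => x (b, j)) - U a b *ᵥ (fun j => x (a, j))) = 0 := by
          funext i
          have := (Finset.sum_eq_zero_iff_of_nonneg
            (fun i _ => Complex.normSq_nonneg _)).mp h4 i (Finset.mem_univ i)
          exact Complex.normSq_eq_zero.mp this
        exact sub_eq_zero.mp h5
      -- propagate along walks
      have hwalkProp : ∀ (u v : V) (w : G.Walk u v),
          (fun j => x (v, j)) = walkProd G U w *ᵥ (fun j => x (u, j)) := by
        intro u v w
        induction w with
        | nil => simp [walkProd]
        | @cons u b v h p ih =>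
          rw [ih, hedgeEq u b h, Matrix.mulVec_mulVec]
          rfl
      have hxs : ∀ s : V, (fun j => x (s, j)) = Us s *ᵥ (fun j => x (v₀, j)) := by
        intro s
        obtain ⟨w⟩ := hG.preconnected v₀ s
        rw [hwalkProp v₀ s w, hUs s w]
      -- completeness of e
      have hcomplete : ∀ v : Fin n → ℂ, ∑ j, (star (e j) ⬝ᵥ v) • e j = v := by
        intro v
        set P : Matrix (Fin n) (Fin n) ℂ := Matrix.of (fun k j => e j k) with hP
        have hPP : Pᴴ * P = 1 := by
          ext i j
          simp only [Matrix.mul_apply, Matrix.conjTranspose_apply, hP, Matrix.of_apply,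
            Matrix.one_apply]
          rw [← he i j]
          simp [dotProduct]
        have hPP' : P * Pᴴ = 1 := mul_eq_one_comm.mp hPP
        have : P *ᵥ (Pᴴ *ᵥ v) = v := by
          rw [Matrix.mulVec_mulVec, hPP', Matrix.one_mulVec]
        funext k
        have := congrFun this k
        rw [← this]
        simp only [Matrix.mulVec, dotProduct, Finset.sum_apply, Pi.smul_apply,
          smul_eq_mul, hP, Matrix.of_apply, Matrix.conjTranspose_apply]
        refine Finset.sum_congr rfl fun j _ => ?_
        simp [dotProduct, mul_comm]
      -- write x as a combination
      have hxeq : x = ∑ j : Fin n,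
          (((r : ℝ) : ℂ) * (star (e j) ⬝ᵥ (fun i => x (v₀, i)))) • kerVec Us e j := by
        funext p
        obtain ⟨s, i⟩ := p
        have hx1 : x (s, i) = (Us s *ᵥ (fun j => x (v₀, j))) i := congrFun (hxs s) i
        have hx2 : ((fun j => x (v₀, j)) : Fin n → ℂ)
            = ∑ j, ((star (e j) ⬝ᵥ (fun i => x (v₀, i))) • e j) :=
          (hcomplete _).symm
        rw [hx1]
        conv_lhs => rw [hx2]
        rw [my_mulVec_sum]
        simp only [Finset.sum_apply, Pi.smul_apply, smul_eq_mul, kerVec,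
          Matrix.mulVec_smul]
        refine Finset.sum_congr rfl fun j _ => ?_
        have : ((r : ℝ) : ℂ) * (((r : ℝ) : ℂ))⁻¹ = 1 := mul_inv_cancel₀ hrne
        field_simp
        rw [← hr, mul_div_assoc, div_self hrne, mul_one]
      rw [hxeq]
      exact Submodule.sum_mem _ fun j _ =>
        Submodule.smul_mem _ _ (Submodule.subset_span ⟨j, rfl⟩)
    · -- span is in kernel
      intro hx
      have : Submodule.span ℂ (Set.range (kerVec Us e)) ≤
          LinearMap.ker (Matrix.mulVecLin (ulgHam G U)) := by
        rw [Submodule.span_le]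
        rintro y ⟨j, rfl⟩
        simp only [SetLike.mem_coe, LinearMap.mem_ker, Matrix.mulVecLin_apply]
        exact hker j
      have := this hx
      simpa using this
  refine ⟨orth, hiff, ?_⟩
  · -- Part 3 : dimension
    have hli : LinearIndependent ℂ (kerVec Us e) := by
      rw [Fintype.linearIndependent_iff]
      intro g hg k
      have h0 := congrArg (fun y => star (kerVec Us e k) ⬝ᵥ y) hg
      simp only [dotProduct_zero] at h0
      rw [my_dot_sum] at h0
      simp only [dotProduct_smul, smul_eq_mul, orth] at h0
      simpa using h0
    have hsetEq : LinearMap.ker (Matrix.toLin' (ulgHam G U))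
        = Submodule.span ℂ (Set.range (kerVec Us e)) := by
      ext y
      rw [LinearMap.mem_ker, Matrix.toLin'_apply]
      exact hiff y
    rw [hsetEq, finrank_span_eq_card hli, Fintype.card_fin]
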